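/- arXiv:1401.7476 — 3 statements merged into one kernel-verified Lean document; each statement's English description precedes it below -/
import Mathlib

section
/- For every n ≥ 1, the Minkowski sum of the segments q_{ij} over all pairs 1 ≤ i < j ≤ n, translated by the point S, equals the standard permutohedron: Σ_{i<j} q_{ij} + {S} = Π_n. -/
open scoped Pointwise RealInnerProductSpace BigOperators

noncomputable section

/-- The face of a set `K` in direction `ξ`: points of `K` maximizing `⟪·, ξ⟫`. -/
def face {n : ℕ} (K : Set (EuclideanSpace ℝ (Fin n))) (ξ : EuclideanSpace ℝ (Fin n)) :
    Set (EuclideanSpace ℝ (Fin n)) :=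
  {x ∈ K | ∀ y ∈ K, ⟪y, ξ⟫ ≤ ⟪x, ξ⟫}

/-- The `i`-th standard basis vector of `ℝⁿ`. -/
def stdVec (n : ℕ) (i : Fin n) : EuclideanSpace ℝ (Fin n) := EuclideanSpace.single i 1

/-- The all-ones vector `S = (1,…,1)`. -/
def allOnes (n : ℕ) : EuclideanSpace ℝ (Fin n) := WithLp.toLp 2 (fun _ => 1)

/-- The segment `q_{ij} = [e_i, e_j]`. -/
def qseg (n : ℕ) (i j : Fin n) : Set (EuclideanSpace ℝ (Fin n)) :=
  segment ℝ (stdVec n i) (stdVec n j)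

/-- The point `R_i = n·e_i − Σ_j e_j` (coordinate `n−1` at position `i`, `−1` elsewhere). -/
def Rpt (n : ℕ) (i : Fin n) : EuclideanSpace ℝ (Fin n) := (n : ℝ) • stdVec n i - allOnes n

/-- The segment `r_i = [0, R_i]`. -/
def rseg (n : ℕ) (i : Fin n) : Set (EuclideanSpace ℝ (Fin n)) := segment ℝ 0 (Rpt n i)

/-- The standard permutohedron `Π_n`: the convex hull of all points obtained by
permuting the coordinates of `(1, 2, …, n)`. -/
def permutohedron (n : ℕ) : Set (EuclideanSpace ℝ (Fin n)) :=
  convexHull ℝ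
    {x : EuclideanSpace ℝ (Fin n) | ∃ σ : Equiv.Perm (Fin n), ∀ i, x i = ((σ i : ℕ) : ℝ) + 1}

/-! Choosing one endpoint of every segment `[e_i, e_j]` orients the complete graph on `n`
vertices, and the chosen endpoints add up to the score vector of this tournament; so the sum of
segments is the convex hull of the score vectors, translated by `S`. The transitive tournament
ranked by a permutation `σ` has scores `σ i`, which gives the vertices of `Π_n`. Conversely, for a
linear functional `f`, the transitive tournament ranked by the values `f e_i` lets every pair be won
by the endpoint with the larger value, so its score vector maximises `f` over all score vectors;
by Hahn–Banach separation every score vector (plus `S`) lies in `Π_n`. -/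

open Finset Set

theorem sum_segment_eq_convexHull {𝕜 E ι : Type*} [Field 𝕜] [LinearOrder 𝕜]
    [IsStrictOrderedRing 𝕜] [AddCommGroup E] [Module 𝕜 E] (s : Finset ι) (a b : ι → E) :
    ∑ p ∈ s, segment 𝕜 (a p) (b p) = convexHull 𝕜 (∑ p ∈ s, ({a p, b p} : Set E)) := by
  simp_rw [convexHull_sum, convexHull_pair]

theorem Convex.mem_of_forall_exists_le {E : Type*} [AddCommGroup E] [Module ℝ E]
    [TopologicalSpace E] [IsTopologicalAddGroup E] [ContinuousSMul ℝ E] [LocallyConvexSpace ℝ E]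
    {s : Set E} (hconv : Convex ℝ s) (hclosed : IsClosed s) {x : E}
    (h : ∀ f : StrongDual ℝ E, ∃ y ∈ s, f x ≤ f y) : x ∈ s := by
  by_contra hx
  obtain ⟨f, u, hs, hu⟩ := geometric_hahn_banach_closed_point hconv hclosed hx
  obtain ⟨y, hy, hxy⟩ := h f
  linarith [hs y hy]

theorem Tuple.exists_perm_le_imp_le {α : Type*} [LinearOrder α] {n : ℕ} (w : Fin n → α) :
    ∃ σ : Equiv.Perm (Fin n), ∀ i j, σ i ≤ σ j → w i ≤ w j :=
  ⟨(Tuple.sort w).symm, fun i j h => by simpa using Tuple.monotone_sort w h⟩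

theorem Equiv.Perm.card_filter_apply_lt {n : ℕ} (σ : Equiv.Perm (Fin n)) (i : Fin n) :
    #{j | σ j < σ i} = σ i := by
  rw [← Fin.card_Iio]
  exact card_nbij' σ σ.symm (fun j hj => by simpa using hj) (fun k hk => by simpa using hk)
    (fun j _ => σ.symm_apply_apply j) (fun k _ => σ.apply_symm_apply k)

section Winner

variable {ι β : Type*} [LinearOrder β]

def winner (σ : ι → β) (i j : ι) : ι := if σ i < σ j then j else i

theorem winner_eq_or_eq (σ : ι → β) (i j : ι) : winner σ i j = i ∨ winner σ i j = j := by
  unfold winner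
  split_ifs <;> simp

theorem le_apply_winner {α : Type*} [Preorder α] {σ : ι → β} {w : ι → α}
    (hσ : ∀ i j, σ i ≤ σ j → w i ≤ w j) (i j : ι) :
    w i ≤ w (winner σ i j) ∧ w j ≤ w (winner σ i j) := by
  unfold winner
  split_ifs with h
  · exact ⟨hσ _ _ h.le, le_rfl⟩
  · exact ⟨le_rfl, hσ _ _ (not_lt.1 h)⟩

theorem card_filter_winner_eq [Fintype ι] [LinearOrder ι] {σ : ι → β}
    (hσ : Function.Injective σ) (i : ι) :
    #{p : ι × ι | p.1 < p.2 ∧ winner σ p.1 p.2 = i} = #{j | σ j < σ i} := by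
  refine card_nbij' (fun p => if p.1 = i then p.2 else p.1)
    (fun j => if j < i then (j, i) else (i, j)) ?_ ?_ ?_ ?_
  all_goals
    intro x hx
    simp only [coe_filter, Set.mem_ofPred_eq, winner] at hx ⊢
    grind

end Winner

variable {n : ℕ}

theorem sum_stdVec_apply {ι : Type*} (s : Finset ι) (c : ι → Fin n) (i : Fin n) :
    (∑ p ∈ s, stdVec n (c p)) i = #{p ∈ s | c p = i} := by
  simp [stdVec, Pi.single_apply, Finset.sum_boole, eq_comm]

def scoreVectors (n : ℕ) : Set (EuclideanSpace ℝ (Fin n)) :=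
  ∑ p : Fin n × Fin n with p.1 < p.2, {stdVec n p.1, stdVec n p.2}

def tournamentPoint (σ : Equiv.Perm (Fin n)) : EuclideanSpace ℝ (Fin n) :=
  ∑ p : Fin n × Fin n with p.1 < p.2, stdVec n (winner σ p.1 p.2) + allOnes n

theorem tournamentPoint_apply (σ : Equiv.Perm (Fin n)) (i : Fin n) :
    tournamentPoint σ i = (σ i : ℕ) + 1 := by
  rw [tournamentPoint, PiLp.add_apply, sum_stdVec_apply, filter_filter,
    card_filter_winner_eq σ.injective, σ.card_filter_apply_lt]
  rfl

theorem permutohedron_eq_convexHull_range :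
    permutohedron n = convexHull ℝ (range (tournamentPoint (n := n))) := by
  refine congrArg _ (Set.ext fun x => ⟨?_, ?_⟩)
  · rintro ⟨σ, hx⟩
    exact ⟨σ, PiLp.ext fun i => (tournamentPoint_apply σ i).trans (hx i).symm⟩
  · rintro ⟨σ, rfl⟩
    exact ⟨σ, tournamentPoint_apply σ⟩

theorem range_tournamentPoint_subset :
    range (tournamentPoint (n := n)) ⊆ scoreVectors n + {allOnes n} := by
  rintro _ ⟨σ, rfl⟩
  refine add_mem_add (finsetSum_mem_finsetSum _ _ _ fun p _ => ?_) rfl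
  rcases winner_eq_or_eq σ p.1 p.2 with h | h <;> rw [h]
  exacts [mem_insert _ _, mem_insert_of_mem _ rfl]

theorem scoreVectors_add_allOnes_subset_permutohedron :
    scoreVectors n + {allOnes n} ⊆ permutohedron n := by
  rintro _ ⟨_, hx, _, rfl, rfl⟩
  obtain ⟨g, hg, rfl⟩ := (mem_finsetSum _ _ _).1 hx
  rw [permutohedron_eq_convexHull_range]
  refine (convex_convexHull ℝ _).mem_of_forall_exists_le
    ((finite_range _).isClosed_convexHull ℝ) fun f => ?_
  obtain ⟨σ, hσ⟩ := Tuple.exists_perm_le_imp_le fun i => f (stdVec n i)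
  refine ⟨tournamentPoint σ, subset_convexHull ℝ _ (mem_range_self σ), ?_⟩
  rw [tournamentPoint, map_add, map_add, map_sum, map_sum]
  gcongr with p hp
  rcases hg hp with h | h <;> rw [h]
  exacts [(le_apply_winner hσ p.1 p.2).1, (le_apply_winner hσ p.1 p.2).2]

theorem permutohedron_eq_sum_segments_general (n : ℕ) :
    (∑ p ∈ Finset.univ.filter (fun p : Fin n × Fin n => p.1 < p.2), qseg n p.1 p.2)
      + ({allOnes n} : Set (EuclideanSpace ℝ (Fin n))) = permutohedron n := by
  have hzonotope : (∑ p ∈ Finset.univ.filter (fun p : Fin n × Fin n => p.1 < p.2),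
      qseg n p.1 p.2) + {allOnes n} = convexHull ℝ (scoreVectors n + {allOnes n}) := by
    rw [convexHull_add, convexHull_singleton, scoreVectors, ← sum_segment_eq_convexHull]
    rfl
  rw [hzonotope]
  refine (convexHull_min scoreVectors_add_allOnes_subset_permutohedron
    (convex_convexHull ℝ _)).antisymm ?_
  rw [permutohedron_eq_convexHull_range]
  exact convexHull_mono range_tournamentPoint_subset

/-- For every `n ≥ 1`, the Minkowski sum of the segments `q_{ij}` over all
pairs `i < j`, translated by `S = (1,…,1)`, equals the standard permutohedron `Π_n`. -/
theorem permutohedron_eq_sum_segments (n : ℕ) (hn : 1 ≤ n) :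
    (∑ p ∈ Finset.univ.filter (fun p : Fin n × Fin n => p.1 < p.2), qseg n p.1 p.2)
      + ({allOnes n} : Set (EuclideanSpace ℝ (Fin n))) = permutohedron n :=
  permutohedron_eq_sum_segments_general n
end
end

section
/- A face of a face of a convex polytope is again a face of the polytope: if K ⊆ ℝ^n is the convex hull of a nonempty finite set, F = K^ξ for some ξ ∈ ℝ^n, and G = F^η for some η ∈ ℝ^n, then there exists ζ ∈ ℝ^n with G = K^ζ. -/
open scoped Pointwise RealInnerProductSpace BigOperators

noncomputable section

/-! Faces of the hull of `V` are hulls of faces of `V`, so it suffices to compose faces of the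
finite set `V`. Tilt `ξ` slightly towards `η`: for small `ε > 0`, the points of `V` off `face V ξ`
still lose to those of `face V ξ` in direction `ξ + ε • η`, while on `face V ξ`, where `⟪·, ξ⟫` is
constant, `ξ + ε • η` orders points as `η` does. -/

section

open Filter Topology

variable {n : ℕ}

lemma face_convexHull_subset (V : Set (EuclideanSpace ℝ (Fin n))) (ξ : EuclideanSpace ℝ (Fin n)) :
    face (convexHull ℝ V) ξ ⊆ convexHull ℝ (face V ξ) := by
  classical
  rintro _ ⟨hx, hmax⟩
  obtain ⟨ι, t, w, z, hw₀, hw₁, hzV, rfl⟩ := (convexHull_eq V).subset hx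
  set c := ⟪t.centerMass w z, ξ⟫ with hc
  have hz_le : ∀ i ∈ t, w i * ⟪z i, ξ⟫ ≤ w i * c := fun i hi =>
    mul_le_mul_of_nonneg_left (hmax _ (subset_convexHull ℝ V (hzV i hi))) (hw₀ i hi)
  have hsum : ∑ i ∈ t, w i * ⟪z i, ξ⟫ = ∑ i ∈ t, w i * c := by
    rw [← Finset.sum_mul, hw₁, one_mul, hc, Finset.centerMass_eq_of_sum_1 _ _ hw₁, sum_inner]
    simp only [real_inner_smul_left]
  have hz_eq : ∀ i ∈ t, w i ≠ 0 → ⟪z i, ξ⟫ = c := fun i hi hwi =>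
    mul_left_cancel₀ hwi ((Finset.sum_eq_sum_iff_of_le hz_le).1 hsum i hi)
  rw [← Finset.centerMass_filter_ne_zero]
  refine Finset.centerMass_mem_convexHull _ (fun i hi => hw₀ i (Finset.mem_filter.1 hi).1)
    (by rw [Finset.sum_filter_ne_zero, hw₁]; exact one_pos) fun i hi => ?_
  obtain ⟨hi, hwi⟩ := Finset.mem_filter.1 hi
  refine ⟨hzV i hi, fun y hy => ?_⟩
  rw [hz_eq i hi hwi]
  exact hmax y (subset_convexHull ℝ V hy)

lemma convexHull_face_subset (V : Set (EuclideanSpace ℝ (Fin n))) (ξ : EuclideanSpace ℝ (Fin n)) :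
    convexHull ℝ (face V ξ) ⊆ face (convexHull ℝ V) ξ := by
  refine fun x hx => ⟨convexHull_mono (fun _ h => h.1) hx, fun y hy => ?_⟩
  have hy_le : ∀ a ∈ face V ξ, ⟪y, ξ⟫ ≤ ⟪a, ξ⟫ := fun a ha =>
    convexHull_min ha.2 (convex_halfSpace_le ((innerₗ _).flip ξ).isLinear _) hy
  exact convexHull_min hy_le (convex_halfSpace_ge ((innerₗ _).flip ξ).isLinear _) hx

lemma face_convexHull (V : Set (EuclideanSpace ℝ (Fin n))) (ξ : EuclideanSpace ℝ (Fin n)) :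
    face (convexHull ℝ V) ξ = convexHull ℝ (face V ξ) :=
  (face_convexHull_subset V ξ).antisymm (convexHull_face_subset V ξ)

variable {V : Set (EuclideanSpace ℝ (Fin n))} {ξ η : EuclideanSpace ℝ (Fin n)}

lemma face_nonempty (hV : V.Finite) (hne : V.Nonempty) (ξ : EuclideanSpace ℝ (Fin n)) :
    (face V ξ).Nonempty :=
  V.exists_max_image (⟪·, ξ⟫) hV hne

lemma inner_eq_of_mem_face {a b : EuclideanSpace ℝ (Fin n)} (ha : a ∈ face V ξ)
    (hb : b ∈ face V ξ) : ⟪a, ξ⟫ = ⟪b, ξ⟫ :=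
  le_antisymm (hb.2 a ha.1) (ha.2 b hb.1)

lemma inner_lt_of_notMem_face {a v : EuclideanSpace ℝ (Fin n)} (hv : v ∈ V \ face V ξ)
    (ha : a ∈ face V ξ) : ⟪v, ξ⟫ < ⟪a, ξ⟫ := by
  by_contra! h
  exact hv.2 ⟨hv.1, fun y hy => (ha.2 y hy).trans h⟩

lemma eventually_inner_lt_of_notMem_face (hV : V.Finite) (ξ η : EuclideanSpace ℝ (Fin n)) :
    ∀ᶠ ε in 𝓝 (0 : ℝ), ∀ v ∈ V \ face V ξ, ∀ a ∈ face V ξ,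
      ⟪v, ξ + ε • η⟫ < ⟪a, ξ + ε • η⟫ := by
  refine hV.sdiff.eventually_all.2 fun v hv =>
    (hV.subset fun _ h => h.1).eventually_all.2 fun a ha => ?_
  have hcont : ∀ u, Continuous fun ε : ℝ => ⟪u, ξ + ε • η⟫ := fun u => by fun_prop
  exact (hcont v).continuousAt.eventually_lt (hcont a).continuousAt
    (by simpa using inner_lt_of_notMem_face hv ha)

lemma face_face_eq_face_add_smul (hV : V.Finite) {ε : ℝ} (hε : 0 < ε)
    (hsep : ∀ v ∈ V \ face V ξ, ∀ a ∈ face V ξ, ⟪v, ξ + ε • η⟫ < ⟪a, ξ + ε • η⟫) :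
    face (face V ξ) η = face V (ξ + ε • η) := by
  have hle_iff : ∀ a ∈ face V ξ, ∀ b ∈ face V ξ,
      ⟪a, ξ + ε • η⟫ ≤ ⟪b, ξ + ε • η⟫ ↔ ⟪a, η⟫ ≤ ⟪b, η⟫ := fun a ha b hb => by
    simp only [inner_add_right, real_inner_smul_right, inner_eq_of_mem_face ha hb,
      add_le_add_iff_left, mul_le_mul_iff_right₀ hε]
  ext x
  constructor
  · rintro ⟨hxA, hxmax⟩
    refine ⟨hxA.1, fun y hy => ?_⟩
    by_cases hyA : y ∈ face V ξ
    · exact (hle_iff y hyA x hxA).2 (hxmax y hyA)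
    · exact (hsep y ⟨hy, hyA⟩ x hxA).le
  · rintro ⟨hxV, hxmax⟩
    obtain ⟨a, ha⟩ := face_nonempty hV ⟨x, hxV⟩ ξ
    have hxA : x ∈ face V ξ := by
      by_contra hxA
      exact (hsep x ⟨hxV, hxA⟩ a ha).not_ge (hxmax a ha.1)
    exact ⟨hxA, fun y hy => (hle_iff y hy x hxA).1 (hxmax y hy.1)⟩

lemma eventually_face_face_eq (hV : V.Finite) (ξ η : EuclideanSpace ℝ (Fin n)) :
    ∀ᶠ ε in 𝓝[>] (0 : ℝ), face (face V ξ) η = face V (ξ + ε • η) := by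
  filter_upwards [self_mem_nhdsWithin,
    nhdsWithin_le_nhds (eventually_inner_lt_of_notMem_face hV ξ η)] with ε hε hsep
  exact face_face_eq_face_add_smul hV hε hsep

end

theorem face_face_general (n : ℕ) (V : Set (EuclideanSpace ℝ (Fin n)))
    (hVfin : V.Finite)
    (K F G : Set (EuclideanSpace ℝ (Fin n))) (hK : K = convexHull ℝ V)
    (ξ : EuclideanSpace ℝ (Fin n)) (hF : F = face K ξ)
    (η : EuclideanSpace ℝ (Fin n)) (hG : G = face F η) :
    ∃ ζ : EuclideanSpace ℝ (Fin n), G = face K ζ := by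
  obtain ⟨ε, hε⟩ := (eventually_face_face_eq hVfin ξ η).exists
  refine ⟨ξ + ε • η, ?_⟩
  rw [hG, hF, hK, face_convexHull, face_convexHull, hε, face_convexHull]

/-- A face of a face of a convex polytope is again a face of the polytope. -/
theorem face_face (n : ℕ) (V : Set (EuclideanSpace ℝ (Fin n)))
    (hVfin : V.Finite) (hVne : V.Nonempty)
    (K F G : Set (EuclideanSpace ℝ (Fin n))) (hK : K = convexHull ℝ V)
    (ξ : EuclideanSpace ℝ (Fin n)) (hF : F = face K ξ)
    (η : EuclideanSpace ℝ (Fin n)) (hG : G = face F η) :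
    ∃ ζ : EuclideanSpace ℝ (Fin n), G = face K ζ :=
  face_face_general n V hVfin K F G hK ξ hF η hG
end
end

section
/- Let n ≥ 3 and let ξ = (x_1,…,x_n) ∈ ℝ^n satisfy x_1 > x_2 > ⋯ > x_n, and let 1 ≤ k ≤ n−1 satisfy x_k > (x_1 + ⋯ + x_n)/n > x_{k+1}. Then the face Π_n^ξ is the single vertex u = (n, n−1, …, 1), the face of each segment r_i in direction ξ is {R_i} for i ≤ k and {0} for i > k, and the point u − Σ_{i=1}^{k} R_i is again a vertex of Π_n, namely the point whose j-th coordinate equals k + 1 − j for j ≤ k and n + k + 1 − j for j > k. -/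
open scoped Pointwise RealInnerProductSpace BigOperators

noncomputable section

/-- The vertex `u = (n, n−1, …, 2, 1)` of the permutohedron. -/
def decVertex (n : ℕ) : EuclideanSpace ℝ (Fin n) := WithLp.toLp 2 (fun j => (n : ℝ) - (j : ℕ))

/-- The point whose `j`-th coordinate (1-indexed) is `k + 1 − j` for `j ≤ k` and
`n + k + 1 − j` for `j > k`. -/
def shiftVertex (n k : ℕ) : EuclideanSpace ℝ (Fin n) :=
  WithLp.toLp 2 (fun j => if (j : ℕ) + 1 ≤ k then (k : ℝ) - (j : ℕ) else (n : ℝ) + k - (j : ℕ))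

/-!
For strictly decreasing `ξ`, the rearrangement inequality shows that among the vertices
`(σ 1 + 1, …, σ n + 1)` of `Π_n` the functional `⟪·, ξ⟫` is maximized exactly at `u`, so the
face of the convex hull is `{u}`. On `r_i` the maximum sits at `R_i` or at `0` according to the
sign of `⟪R_i, ξ⟫ = n ξ_i − Σ_j ξ_j`, i.e. to whether `ξ_i` lies above or below the mean. Finally
`u − Σ_{i ≤ k} R_i = u − n Σ_{i ≤ k} e_i + k S`, whose `j`-th coordinate minus one is
`k − j mod n` (1-indexed), so it is the vertex of the permutation `j ↦ (k − 1) − j` of `Fin n`.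
-/

theorem inner_eq_sum_mul {n : ℕ} (x y : EuclideanSpace ℝ (Fin n)) :
    ⟪x, y⟫ = ∑ j, x j * y j := by
  simp [PiLp.inner_apply, mul_comm]

theorem face_segment_of_inner_lt {n : ℕ} {a b ξ : EuclideanSpace ℝ (Fin n)}
    (h : ⟪a, ξ⟫ < ⟪b, ξ⟫) : face (segment ℝ a b) ξ = {b} := by
  have inner_param : ∀ θ : ℝ, ⟪a + θ • (b - a), ξ⟫ = ⟪a, ξ⟫ + θ * (⟪b, ξ⟫ - ⟪a, ξ⟫) := by
    intro θ
    rw [inner_add_left, real_inner_smul_left, inner_sub_left]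
  refine Set.eq_singleton_iff_unique_mem.2 ⟨⟨right_mem_segment ℝ a b, ?_⟩, ?_⟩
  · rw [segment_eq_image']
    rintro _ ⟨θ, ⟨-, hθ1⟩, rfl⟩
    rw [inner_param]
    nlinarith
  · rintro _ ⟨hx, hmax⟩
    rw [segment_eq_image'] at hx
    obtain ⟨θ, ⟨-, hθ1⟩, rfl⟩ := hx
    have hb := hmax b (right_mem_segment ℝ a b)
    rw [inner_param] at hb
    obtain rfl : θ = 1 := le_antisymm hθ1 (by nlinarith)
    simp

theorem face_convexHull_eq_singleton {n : ℕ} {V : Set (EuclideanSpace ℝ (Fin n))}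
    {u ξ : EuclideanSpace ℝ (Fin n)} (hu : u ∈ V) (hV : ∀ v ∈ V, v ≠ u → ⟪v, ξ⟫ < ⟪u, ξ⟫) :
    face (convexHull ℝ V) ξ = {u} := by
  have hle : ∀ v ∈ V, ⟪v, ξ⟫ ≤ ⟪u, ξ⟫ := fun v hv =>
    (eq_or_ne v u).elim (fun h => h ▸ le_rfl) fun h => (hV v hv h).le
  have hu_hull : u ∈ convexHull ℝ V := subset_convexHull ℝ V hu
  refine Set.eq_singleton_iff_unique_mem.2 ⟨⟨hu_hull, fun y hy => ?_⟩, ?_⟩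
  · exact convexHull_min hle (convex_halfSpace_le (f := fun w => ⟪w, ξ⟫)
      ⟨fun a b => inner_add_left a b ξ, fun c a => real_inner_smul_left a ξ c⟩ _) hy
  rintro x ⟨hx, hmax⟩
  obtain ⟨ι, t, w, z, hw0, hw1, hz, rfl⟩ := (convexHull_eq V).subset hx
  rw [Finset.centerMass_eq_of_sum_1 _ _ hw1] at hmax ⊢
  have hgap_nonneg : ∀ i ∈ t, 0 ≤ w i * (⟪u, ξ⟫ - ⟪z i, ξ⟫) := fun i hi =>
    mul_nonneg (hw0 i hi) (sub_nonneg.2 (hle _ (hz i hi)))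
  have hgap_sum : ∑ i ∈ t, w i * (⟪u, ξ⟫ - ⟪z i, ξ⟫) = ⟪u, ξ⟫ - ⟪∑ i ∈ t, w i • z i, ξ⟫ := by
    simp only [mul_sub, Finset.sum_sub_distrib, ← Finset.sum_mul, hw1, one_mul, sum_inner,
      real_inner_smul_left]
  have hgap_zero : ∀ i ∈ t, w i * (⟪u, ξ⟫ - ⟪z i, ξ⟫) = 0 :=
    (Finset.sum_eq_zero_iff_of_nonneg hgap_nonneg).1 <| le_antisymm
      (hgap_sum ▸ sub_nonpos.2 (hmax u hu_hull)) (Finset.sum_nonneg hgap_nonneg)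
  calc ∑ i ∈ t, w i • z i = ∑ i ∈ t, w i • u := by
        refine Finset.sum_congr rfl fun i hi => ?_
        obtain hzi | hzi := eq_or_ne (z i) u
        · rw [hzi]
        · have hwi : w i = 0 := (mul_eq_zero.1 (hgap_zero i hi)).resolve_right
            (sub_ne_zero.2 (hV _ (hz i hi) hzi).ne')
          simp [hwi]
    _ = u := by rw [← Finset.sum_smul, hw1, one_smul]

theorem decVertex_apply {n : ℕ} (j : Fin n) : decVertex n j = ((Fin.rev j : ℕ) : ℝ) + 1 := by
  rw [decVertex, Fin.val_rev, Nat.cast_sub (by omega)]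
  push_cast
  ring

theorem strictAnti_decVertex (n : ℕ) : StrictAnti fun j : Fin n => decVertex n j := by
  intro i j hij
  simp only [decVertex]
  exact sub_lt_sub_left (Nat.cast_lt.2 hij) _

theorem exists_perm_decVertex_eq (n : ℕ) :
    ∃ σ : Equiv.Perm (Fin n), ∀ j, decVertex n j = ((σ j : ℕ) : ℝ) + 1 :=
  ⟨Fin.revPerm, decVertex_apply⟩

theorem sum_decVertex_perm_mul_lt {n : ℕ} {ξ : EuclideanSpace ℝ (Fin n)}
    (hξ : StrictAnti fun j => ξ j) {τ : Equiv.Perm (Fin n)} (hτ : τ ≠ 1) :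
    ∑ j, decVertex n (τ j) * ξ j < ∑ j, decVertex n j * ξ j := by
  have hmono : Monovary (fun j => decVertex n j) fun j => ξ j :=
    (strictAnti_decVertex n).antitone.monovary hξ.antitone
  simp only [← smul_eq_mul]
  rw [hmono.sum_comp_perm_smul_lt_sum_smul_iff]
  intro hmono_τ
  have hτ_mono : Monotone τ := fun a b hab =>
    hab.eq_or_lt.elim (fun h => h ▸ le_rfl) fun h =>
      (strictAnti_decVertex n).le_iff_ge.1 (hmono_τ (hξ h))
  exact hτ (Equiv.ext fun j => (hτ_mono.strictMono_of_injective τ.injective).apply_eq)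

theorem inner_lt_inner_decVertex {n : ℕ} {ξ x : EuclideanSpace ℝ (Fin n)}
    (hξ : StrictAnti fun j => ξ j) {σ : Equiv.Perm (Fin n)} (hx : ∀ j, x j = ((σ j : ℕ) : ℝ) + 1)
    (hne : x ≠ decVertex n) : ⟪x, ξ⟫ < ⟪decVertex n, ξ⟫ := by
  have hx_comp : ∀ j, x j = decVertex n ((σ.trans Fin.revPerm) j) := fun j => by
    simp [hx, decVertex_apply]
  rw [inner_eq_sum_mul, inner_eq_sum_mul]
  simp only [hx_comp]
  refine sum_decVertex_perm_mul_lt hξ fun hτ => hne ?_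
  ext j
  rw [hx_comp, hτ, Equiv.Perm.one_apply]

theorem face_permutohedron {n : ℕ} {ξ : EuclideanSpace ℝ (Fin n)}
    (hξ : StrictAnti fun j => ξ j) : face (permutohedron n) ξ = {decVertex n} := by
  refine face_convexHull_eq_singleton (exists_perm_decVertex_eq n) ?_
  rintro x ⟨σ, hx⟩ hne
  exact inner_lt_inner_decVertex hξ hx hne

theorem inner_Rpt {n : ℕ} (i : Fin n) (ξ : EuclideanSpace ℝ (Fin n)) :
    ⟪Rpt n i, ξ⟫ = n * ξ i - ∑ j, ξ j := by
  rw [Rpt, inner_sub_left, real_inner_smul_left, stdVec, EuclideanSpace.inner_single_left,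
    inner_eq_sum_mul]
  simp [allOnes]

theorem face_rseg_of_mean_lt {n : ℕ} {ξ : EuclideanSpace ℝ (Fin n)} {i : Fin n}
    (h : (∑ j, ξ j) / n < ξ i) : face (rseg n i) ξ = {Rpt n i} := by
  have hn : (0 : ℝ) < n := Nat.cast_pos.2 (Fin.pos i)
  refine face_segment_of_inner_lt ?_
  rw [inner_zero_left, inner_Rpt]
  rw [div_lt_iff₀ hn] at h
  linarith

theorem face_rseg_of_lt_mean {n : ℕ} {ξ : EuclideanSpace ℝ (Fin n)} {i : Fin n}
    (h : ξ i < (∑ j, ξ j) / n) : face (rseg n i) ξ = {0} := by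
  have hn : (0 : ℝ) < n := Nat.cast_pos.2 (Fin.pos i)
  rw [rseg, segment_symm]
  refine face_segment_of_inner_lt ?_
  rw [inner_zero_left, inner_Rpt]
  rw [lt_div_iff₀ hn] at h
  linarith

theorem sum_Rpt_apply {n : ℕ} (s : Finset (Fin n)) (j : Fin n) :
    (∑ i ∈ s, Rpt n i) j = n * (if j ∈ s then 1 else 0) - s.card := by
  simp [WithLp.ofLp_sum, Finset.sum_apply, Rpt, stdVec, allOnes, Finset.sum_sub_distrib, ← Finset.mul_sum]

theorem decVertex_sub_sum_Rpt {n k : ℕ} (hk : k ≤ n) :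
    decVertex n - ∑ i ∈ Finset.univ.filter (fun i : Fin n => (i : ℕ) + 1 ≤ k), Rpt n i
      = shiftVertex n k := by
  ext j
  have hcard : (Finset.univ.filter fun i : Fin n => (i : ℕ) + 1 ≤ k).card = k := by
    simpa [Nat.add_one_le_iff, hk] using Fin.card_filter_val_lt (n := n) (m := k)
  rw [PiLp.sub_apply, sum_Rpt_apply, hcard]
  by_cases hj : (j : ℕ) < k
  · simp [hj, decVertex, shiftVertex]
  · simp [hj, decVertex, shiftVertex]
    ring

theorem exists_perm_shiftVertex_eq {n k : ℕ} (hk1 : 1 ≤ k) (hkn : k ≤ n) :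
    ∃ σ : Equiv.Perm (Fin n), ∀ j, shiftVertex n k j = ((σ j : ℕ) : ℝ) + 1 := by
  have : NeZero n := ⟨by omega⟩
  refine ⟨Equiv.subLeft ⟨k - 1, by omega⟩, fun j => ?_⟩
  simp only [shiftVertex, Equiv.subLeft_apply]
  split_ifs with hj
  · rw [Fin.coe_sub_iff_le.2 (Fin.le_def.2 (by simp; omega)), Fin.val_mk]
    push_cast [Nat.cast_sub (show (j : ℕ) ≤ k - 1 by omega), Nat.cast_sub hk1]
    ring
  · rw [Fin.coe_sub_iff_lt.2 (Fin.lt_def.2 (by simp; omega)), Fin.val_mk]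
    push_cast [Nat.cast_sub (show (j : ℕ) ≤ n + (k - 1) by omega), Nat.cast_sub hk1]
    ring

/-- For `n ≥ 3`, `ξ` with strictly decreasing coordinates and `1 ≤ k ≤ n−1`
with `ξ_k > (ξ_1 + ⋯ + ξ_n)/n > ξ_{k+1}` (1-indexed): the face of `Π_n` in direction `ξ`
is the single vertex `u = (n, n−1, …, 1)`; the face of `r_i` is `{R_i}` for `i ≤ k` and
`{0}` for `i > k`; and `u − Σ_{i ≤ k} R_i` is the vertex of `Π_n` whose `j`-th coordinate
(1-indexed) is `k + 1 − j` for `j ≤ k` and `n + k + 1 − j` for `j > k`. -/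
theorem face_cyclopermutohedron_vertex (n : ℕ)
    (ξ : EuclideanSpace ℝ (Fin n))
    (hdec : ∀ i j : Fin n, i < j → ξ j < ξ i)
    (k : ℕ) (hk1 : 1 ≤ k) (hk2 : k ≤ n - 1)
    (hka : (∑ j, ξ j) / n < ξ ⟨k - 1, by omega⟩)
    (hkb : ξ ⟨k, by omega⟩ < (∑ j, ξ j) / n) :
    face (permutohedron n) ξ = {decVertex n} ∧
      (∀ i : Fin n, ((i : ℕ) + 1 ≤ k → face (rseg n i) ξ = {Rpt n i}) ∧
        (k < (i : ℕ) + 1 → face (rseg n i) ξ = {0})) ∧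
      decVertex n - ∑ i ∈ Finset.univ.filter (fun i : Fin n => (i : ℕ) + 1 ≤ k), Rpt n i
        = shiftVertex n k ∧
      (∃ σ : Equiv.Perm (Fin n), ∀ j : Fin n, shiftVertex n k j = ((σ j : ℕ) : ℝ) + 1) := by
  have hξ : StrictAnti fun j => ξ j := hdec
  refine ⟨face_permutohedron hξ, fun i => ⟨fun hi => ?_, fun hi => ?_⟩,
    decVertex_sub_sum_Rpt (by omega), exists_perm_shiftVertex_eq hk1 (by omega)⟩
  · exact face_rseg_of_mean_lt (hka.trans_le (hξ.antitone (Fin.le_def.2 (by simp; omega))))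
  · exact face_rseg_of_lt_mean ((hξ.antitone (Fin.le_def.2 (by simp; omega))).trans_lt hkb)
end
end
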